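/- Let d ≥ 1, let G : ℝ^d → ℝ be a bounded continuously differentiable function with bounded gradient, and let ψ ∈ C_c^∞(ℝ^d; ℂ). Then Re ∫_{ℝ^d} ⟨∇ψ(x), ∇(G(x)²ψ(x))⟩ dx = ∫_{ℝ^d} |∇(G(x)ψ(x))|² dx − ∫_{ℝ^d} |ψ(x)|² |∇G(x)|² dx, where ⟨·,·⟩ is the standard Hermitian inner product on ℂ^d (conjugate-linear in the second slot applied to ∇(G²ψ), i.e. ⟨∇ψ, ∇(G²ψ̄)⟩ summed over coordinates). -/

import Mathlib

/-!
STATEMENT 3 (Agmon-type identity): Let `d ≥ 1`, let `G : ℝ^d → ℝ` be a bounded C¹ function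
with bounded gradient and `ψ ∈ C_c^∞(ℝ^d; ℂ)`. Then
`Re ∫ ⟨∇ψ, ∇(G²ψ)⟩ = ∫ |∇(Gψ)|² − ∫ |ψ|² |∇G|²`,
where `⟨u, v⟩ = ∑ i uᵢ * conj vᵢ` is the standard Hermitian inner product on `ℂ^d`
(conjugate-linear in the second slot, applied to `∇(G²ψ)`).

Partial derivatives are expressed via `fderiv ℝ` applied to the standard basis vectors;
`|∇(Gψ)|² = ∑ i ‖∂ᵢ(Gψ)‖²` and `|∇G|² = ‖fderiv ℝ G x‖²` (operator norm = gradient norm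
for real-valued functions on a real inner product space).
-/

open MeasureTheory Complex

/-- `⟨∇f(x), ∇g(x)⟩`: Hermitian inner product of the (complex) gradients,
conjugate-linear in the second argument. -/
noncomputable def gradPair3 (d : ℕ) (f g : EuclideanSpace ℝ (Fin d) → ℂ)
    (x : EuclideanSpace ℝ (Fin d)) : ℂ :=
  ∑ i, fderiv ℝ f x (EuclideanSpace.single i 1)
        * (starRingEnd ℂ) (fderiv ℝ g x (EuclideanSpace.single i 1))

/-- `|∇f(x)|²` for a complex-valued `f`. -/
noncomputable def gradSqC3 (d : ℕ) (f : EuclideanSpace ℝ (Fin d) → ℂ)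
    (x : EuclideanSpace ℝ (Fin d)) : ℝ :=
  ∑ i, ‖fderiv ℝ f x (EuclideanSpace.single i 1)‖ ^ 2

/-! The identity already holds pointwise, with no integration by parts: by the product rule
`∂ᵢ(G²ψ) = G² ∂ᵢψ + 2G ∂ᵢG ψ` and `∂ᵢ(Gψ) = G ∂ᵢψ + ∂ᵢG ψ`, and for real `g, q`,
`Re (p · conj (g² p + 2gq a)) = |g p + q a|² − q² |a|²`. Compact support of `ψ` makes all three
integrands integrable, so the integrals can be split. -/

theorem EuclideanSpace.norm_sq_eq_sum_sq_apply_single {ι : Type*} [Fintype ι] [DecidableEq ι]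
    (B : EuclideanSpace ℝ ι →L[ℝ] ℝ) :
    ‖B‖ ^ 2 = ∑ i, B (EuclideanSpace.single i 1) ^ 2 := by
  set w := (InnerProductSpace.toDual ℝ (EuclideanSpace ℝ ι)).symm B
  have hB : ∀ v, B v = inner ℝ w v := fun v => InnerProductSpace.toDual_symm_apply.symm
  have hnorm : ‖B‖ = ‖w‖ := ((InnerProductSpace.toDual ℝ _).symm.norm_map B).symm
  rw [hnorm, EuclideanSpace.norm_eq, Real.sq_sqrt (by positivity)]
  refine Finset.sum_congr rfl fun i _ => ?_
  rw [hB, EuclideanSpace.inner_single_right]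
  simp

theorem re_mul_conj_sq_mul_add (g q : ℝ) (a p : ℂ) :
    (p * starRingEnd ℂ ((g : ℂ) ^ 2 * p + (2 * g * q : ℝ) * a)).re
      = ‖(g : ℂ) * p + (q : ℂ) * a‖ ^ 2 - ‖a‖ ^ 2 * q ^ 2 := by
  simp only [← Complex.ofReal_pow, Complex.sq_norm, Complex.normSq_apply, Complex.mul_re,
    Complex.mul_im, Complex.add_re, Complex.add_im, Complex.conj_re, Complex.conj_im,
    Complex.ofReal_re, Complex.ofReal_im]
  ring

section

variable {E : Type*} [NormedAddCommGroup E] [NormedSpace ℝ E]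

theorem fderiv_ofReal_mul_apply {G : E → ℝ} {ψ : E → ℂ} {x : E}
    (hG : DifferentiableAt ℝ G x) (hψ : DifferentiableAt ℝ ψ x) (v : E) :
    fderiv ℝ (fun y => (G y : ℂ) * ψ y) x v
      = G x * fderiv ℝ ψ x v + fderiv ℝ G x v * ψ x := by
  have hGc : HasFDerivAt (fun y => (G y : ℂ)) (Complex.ofRealCLM.comp (fderiv ℝ G x)) x :=
    Complex.ofRealCLM.hasFDerivAt.comp x hG.hasFDerivAt
  rw [fderiv_fun_mul hGc.differentiableAt hψ, hGc.fderiv]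
  simp [mul_comm]

theorem fderiv_ofReal_sq_mul_apply {G : E → ℝ} {ψ : E → ℂ} {x : E}
    (hG : DifferentiableAt ℝ G x) (hψ : DifferentiableAt ℝ ψ x) (v : E) :
    fderiv ℝ (fun y => (G y : ℂ) ^ 2 * ψ y) x v
      = (G x : ℂ) ^ 2 * fderiv ℝ ψ x v + (2 * G x * fderiv ℝ G x v : ℝ) * ψ x := by
  have hG2 : DifferentiableAt ℝ (fun y => G y ^ 2) x := hG.pow 2
  have h := fderiv_ofReal_mul_apply hG2 hψ v
  simp only [Complex.ofReal_pow] at h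
  rw [h, fderiv_fun_pow 2 hG]
  simp

end

theorem re_gradPair3_sq_mul {d : ℕ} {G : EuclideanSpace ℝ (Fin d) → ℝ}
    {ψ : EuclideanSpace ℝ (Fin d) → ℂ} {x : EuclideanSpace ℝ (Fin d)}
    (hG : DifferentiableAt ℝ G x) (hψ : DifferentiableAt ℝ ψ x) :
    (gradPair3 d ψ (fun y => (G y : ℂ) ^ 2 * ψ y) x).re
      = gradSqC3 d (fun y => (G y : ℂ) * ψ y) x - ‖ψ x‖ ^ 2 * ‖fderiv ℝ G x‖ ^ 2 := by
  rw [gradPair3, gradSqC3, Complex.re_sum, EuclideanSpace.norm_sq_eq_sum_sq_apply_single,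
    Finset.mul_sum, ← Finset.sum_sub_distrib]
  refine Finset.sum_congr rfl fun i _ => ?_
  rw [fderiv_ofReal_sq_mul_apply hG hψ, fderiv_ofReal_mul_apply hG hψ, re_mul_conj_sq_mul_add]

theorem integrable_gradPair3 {d : ℕ} {f g : EuclideanSpace ℝ (Fin d) → ℂ}
    (hf : ContDiff ℝ 1 f) (hfc : HasCompactSupport f) (hg : ContDiff ℝ 1 g) :
    Integrable (gradPair3 d f g) := by
  have hcont : Continuous (gradPair3 d f g) :=
    continuous_finsetSum _ fun i _ =>
      ((hf.continuous_fderiv one_ne_zero).clm_apply continuous_const).mul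
        (Complex.continuous_conj.comp
          ((hg.continuous_fderiv one_ne_zero).clm_apply continuous_const))
  refine hcont.integrable_of_hasCompactSupport ((hfc.fderiv (𝕜 := ℝ)).mono ?_)
  exact Function.support_subset_iff'.mpr fun x hx => by
    simp [gradPair3, Function.notMem_support.mp hx]

theorem integrable_gradSqC3 {d : ℕ} {f : EuclideanSpace ℝ (Fin d) → ℂ}
    (hf : ContDiff ℝ 1 f) (hfc : HasCompactSupport f) :
    Integrable (gradSqC3 d f) := by
  have hcont : Continuous (gradSqC3 d f) :=
    continuous_finsetSum _ fun i _ =>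
      ((hf.continuous_fderiv one_ne_zero).clm_apply continuous_const).norm.pow 2
  refine hcont.integrable_of_hasCompactSupport ((hfc.fderiv (𝕜 := ℝ)).mono ?_)
  exact Function.support_subset_iff'.mpr fun x hx => by
    simp [gradSqC3, Function.notMem_support.mp hx]

theorem stmt_3 (d : ℕ) (G : EuclideanSpace ℝ (Fin d) → ℝ)
    (hG : ContDiff ℝ 1 G)
    (ψ : EuclideanSpace ℝ (Fin d) → ℂ)
    (hψ : ContDiff ℝ (⊤ : ℕ∞) ψ) (hψc : HasCompactSupport ψ) :
    (∫ x, gradPair3 d ψ (fun y => (G y : ℂ) ^ 2 * ψ y) x).re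
      = (∫ x, gradSqC3 d (fun y => (G y : ℂ) * ψ y) x)
        - ∫ x, ‖ψ x‖ ^ 2 * ‖fderiv ℝ G x‖ ^ 2 := by
  have hψ1 : ContDiff ℝ 1 ψ := hψ.of_le (by exact_mod_cast le_top)
  have hGc : ContDiff ℝ 1 (fun y => (G y : ℂ)) := Complex.ofRealCLM.contDiff.comp hG
  have hint_pair := integrable_gradPair3 hψ1 hψc ((hGc.pow 2).mul hψ1)
  have hint_sq := integrable_gradSqC3 (hGc.mul hψ1) hψc.mul_left
  have hint_err : Integrable fun x => ‖ψ x‖ ^ 2 * ‖fderiv ℝ G x‖ ^ 2 :=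
    Continuous.integrable_of_hasCompactSupport
      ((hψ1.continuous.norm.pow 2).mul ((hG.continuous_fderiv one_ne_zero).norm.pow 2))
      (hψc.norm.comp_left (g := (· ^ 2)) (zero_pow two_ne_zero)).mul_right
  rw [← Complex.reCLM_apply, ← Complex.reCLM.integral_comp_comm hint_pair,
    ← integral_sub hint_sq hint_err]
  exact integral_congr_ae (.of_forall fun x =>
    re_gradPair3_sq_mul (hG.differentiable one_ne_zero x) (hψ1.differentiable one_ne_zero x))
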